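/- Let (𝔞, δ) be a Lie bialgebra and let f ∈ Λ²𝔞 be a classical twist, i.e., Alt((δ ⊗ id)(f)) + [f^{13}, f^{23}] + [f^{12}, f^{13}] + [f^{12}, f^{23}] = 0 (equivalently, CYB-type condition: the cyclic sum of (δ⊗id)(f) + [f^{13}, f^{23}] vanishes). Then δ_f := δ + ad(f), where ad(f)(x) := [f, x ⊗ 1 + 1 ⊗ x], defines a Lie bialgebra structure on 𝔞 with the same Lie bracket, i.e., δ_f is a 1-cocycle satisfying the co-Jacobi identity. -/

import Mathlib

/-!
Write `δ_f = δ - ∂f` with `∂f x = x · f`. Antisymmetry and the cocycle condition are linear in the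
cobracket, and `∂f` is a coboundary, so both pass from `δ` to `δ_f`. For co-Jacobi, expand
`(δ_f ⊗ id) δ_f x` and use the cocycle property of `δ` to commute `x` past `δ ⊗ id`. Two identities
on `Λ²a` finish the computation: `Σ_cyc (∂f ⊗ id) g = -Σ_cyc ([f¹³, g²³] + [g¹³, f²³])`, which is
symmetric in `f, g` and so cancels the cross terms, and the `a`-equivariance of
`(f, g) ↦ [f¹³, g²³]`, which turns the quadratic term into `x · Σ_cyc [f¹³, f²³]`. What remains is
`Σ_cyc (δ ⊗ id) δ x - x · Σ_cyc ((δ ⊗ id) f + [f¹³, f²³])`, which vanishes by co-Jacobi for `δ`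
and the twist equation.
-/

open TensorProduct

variable (k : Type) [Field k] (a : Type) [LieRing a] [LieAlgebra k a]

/-- The Lie bracket of `a` as a bilinear map. -/
noncomputable def br2 : a →ₗ[k] a →ₗ[k] a :=
  LinearMap.mk₂ k (fun x y => ⁅x, y⁆) add_lie smul_lie lie_add lie_smul

/-- The Lie bracket as a linear map on the tensor square. -/
noncomputable def brL : a ⊗[k] a →ₗ[k] a := TensorProduct.lift (br2 k a)

/-- The adjoint action of `a` on `a ⊗ a`: `act x (u ⊗ v) = ⁅x,u⁆ ⊗ v + u ⊗ ⁅x,v⁆`,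
which equals `[x ⊗ 1 + 1 ⊗ x, u ⊗ v]` in `U(a) ⊗ U(a)`. -/
noncomputable def act : a →ₗ[k] (a ⊗[k] a →ₗ[k] a ⊗[k] a) where
  toFun x := TensorProduct.map (br2 k a x) LinearMap.id + TensorProduct.map LinearMap.id (br2 k a x)
  map_add' x y := by
    ext u v
    simp [br2, add_lie, TensorProduct.tmul_add, TensorProduct.add_tmul]
    abel
  map_smul' c x := by
    ext u v
    simp [br2, smul_lie, TensorProduct.tmul_add, TensorProduct.smul_tmul', TensorProduct.tmul_smul,
      smul_add]

/-- `adL f` is the map `x ↦ [f, x ⊗ 1 + 1 ⊗ x]`. -/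
noncomputable def adL (f : a ⊗[k] a) : a →ₗ[k] a ⊗[k] a := -((act k a).flip f)

/-- Cyclic permutation `x ⊗ y ⊗ z ↦ y ⊗ z ⊗ x` on the triple tensor product. -/
noncomputable def cyc : a ⊗[k] (a ⊗[k] a) →ₗ[k] a ⊗[k] (a ⊗[k] a) :=
  (TensorProduct.congr (LinearEquiv.refl k a) (TensorProduct.comm k a a)).toLinearMap ∘ₗ
    (TensorProduct.leftComm k a a a).toLinearMap

/-- Sum over cyclic permutations. -/
noncomputable def cycSum (w : a ⊗[k] (a ⊗[k] a)) : a ⊗[k] (a ⊗[k] a) :=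
  w + cyc k a w + cyc k a (cyc k a w)

/-- `(d ⊗ id)` on the tensor square, landing in the triple tensor product. -/
noncomputable def d13 (d : a →ₗ[k] a ⊗[k] a) : a ⊗[k] a →ₗ[k] a ⊗[k] (a ⊗[k] a) :=
  (TensorProduct.assoc k a a a).toLinearMap ∘ₗ TensorProduct.map d LinearMap.id

/-- `(f, g) ↦ [f^{13}, g^{23}]`: on pure tensors `(x ⊗ y, u ⊗ v) ↦ x ⊗ u ⊗ ⁅y,v⁆`. -/
noncomputable def C13_23 : (a ⊗[k] a) ⊗[k] (a ⊗[k] a) →ₗ[k] a ⊗[k] (a ⊗[k] a) :=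
  (TensorProduct.map LinearMap.id (TensorProduct.map LinearMap.id (brL k a))) ∘ₗ
    (TensorProduct.congr (LinearEquiv.refl k a) (TensorProduct.leftComm k a a a)).toLinearMap ∘ₗ
    (TensorProduct.assoc k a a (a ⊗[k] a)).toLinearMap

/-- `(f, g) ↦ [f^{12}, g^{13}]`: on pure tensors `(x ⊗ y, u ⊗ v) ↦ ⁅x,u⁆ ⊗ y ⊗ v`. -/
noncomputable def C12_13 : (a ⊗[k] a) ⊗[k] (a ⊗[k] a) →ₗ[k] a ⊗[k] (a ⊗[k] a) :=
  (TensorProduct.map (brL k a) LinearMap.id) ∘ₗ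
    (TensorProduct.tensorTensorTensorComm k a a a a).toLinearMap

/-- `(f, g) ↦ [f^{12}, g^{23}]`: on pure tensors `(x ⊗ y, u ⊗ v) ↦ x ⊗ ⁅y,u⁆ ⊗ v`. -/
noncomputable def C12_23 : (a ⊗[k] a) ⊗[k] (a ⊗[k] a) →ₗ[k] a ⊗[k] (a ⊗[k] a) :=
  (TensorProduct.map LinearMap.id (TensorProduct.map (brL k a) LinearMap.id)) ∘ₗ
    (TensorProduct.congr (LinearEquiv.refl k a) (TensorProduct.assoc k a a a).symm).toLinearMap ∘ₗ
    (TensorProduct.assoc k a a (a ⊗[k] a)).toLinearMap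

/-- Membership in `Λ²a`: antisymmetry in `a ⊗ a`. -/
def IsAntisym (w : a ⊗[k] a) : Prop := TensorProduct.comm k a a w = -w

/-- The 1-cocycle condition for a cobracket. -/
def IsCocycle (d : a →ₗ[k] a ⊗[k] a) : Prop :=
  ∀ x y : a, d ⁅x, y⁆ = act k a x (d y) - act k a y (d x)

/-- The co-Jacobi identity. -/
def IsCoJacobi (d : a →ₗ[k] a ⊗[k] a) : Prop :=
  ∀ x : a, cycSum k a ((d13 k a d) (d x)) = 0

/-- `(a, d)` is a Lie bialgebra. -/
def IsLieCobracket (d : a →ₗ[k] a ⊗[k] a) : Prop :=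
  (∀ x, IsAntisym k a (d x)) ∧ IsCocycle k a d ∧ IsCoJacobi k a d

/-- The classical twist equation `(d ⊗ id)(f) + [f^{13}, f^{23}] + cyclic permutations = 0`. -/
def IsTwist (d : a →ₗ[k] a ⊗[k] a) (f : a ⊗[k] a) : Prop :=
  cycSum k a ((d13 k a d) f + C13_23 k a (f ⊗ₜ f)) = 0

/-- The twisted cobracket `δ + ad(f)`. -/
noncomputable def twistCobr (d : a →ₗ[k] a ⊗[k] a) (f : a ⊗[k] a) : a →ₗ[k] a ⊗[k] a :=
  d + adL k a f


noncomputable def coboundary : a ⊗[k] a →ₗ[k] a →ₗ[k] a ⊗[k] a := (act k a).flip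

noncomputable def act₃ (x : a) : a ⊗[k] (a ⊗[k] a) →ₗ[k] a ⊗[k] (a ⊗[k] a) :=
  TensorProduct.map (br2 k a x) LinearMap.id + TensorProduct.map LinearMap.id (act k a x)

noncomputable def cycSumₗ : a ⊗[k] (a ⊗[k] a) →ₗ[k] a ⊗[k] (a ⊗[k] a) :=
  LinearMap.id + cyc k a + cyc k a ∘ₗ cyc k a

noncomputable def alt : a ⊗[k] a →ₗ[k] a ⊗[k] a :=
  LinearMap.id - (TensorProduct.comm k a a).toLinearMap

variable {k a}

lemma act_tmul (x u v : a) : act k a x (u ⊗ₜ v) = ⁅x, u⁆ ⊗ₜ v + u ⊗ₜ ⁅x, v⁆ := by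
  simp [act, br2]

lemma comm_act (x : a) (w : a ⊗[k] a) :
    TensorProduct.comm k a a (act k a x w) = act k a x (TensorProduct.comm k a a w) := by
  induction w using TensorProduct.induction_on with
  | zero => simp
  | tmul u v => simp [act_tmul, add_comm]
  | add w₁ w₂ h₁ h₂ => simp only [map_add, h₁, h₂]

lemma act_lie (x y : a) (w : a ⊗[k] a) :
    act k a ⁅x, y⁆ w = act k a x (act k a y w) - act k a y (act k a x w) := by
  induction w using TensorProduct.induction_on with
  | zero => simp
  | tmul u v =>
    simp only [act_tmul, map_add, lie_lie, sub_tmul, tmul_sub]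
    abel
  | add w₁ w₂ h₁ h₂ => simp only [map_add, h₁, h₂]; abel

lemma IsAntisym.sub {v w : a ⊗[k] a} (hv : IsAntisym k a v) (hw : IsAntisym k a w) :
    IsAntisym k a (v - w) := by
  rw [IsAntisym, map_sub, hv, hw, neg_sub_neg, neg_sub]

lemma IsAntisym.act {w : a ⊗[k] a} (hw : IsAntisym k a w) (x : a) :
    IsAntisym k a (act k a x w) := by
  rw [IsAntisym, comm_act, hw, map_neg]

lemma IsAntisym.alt_eq {w : a ⊗[k] a} (hw : IsAntisym k a w) : alt k a w = (2 : k) • w := by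
  rw [alt, LinearMap.sub_apply, LinearEquiv.coe_coe, hw]
  module

@[simp] lemma coboundary_apply (f : a ⊗[k] a) (x : a) : coboundary k a f x = act k a x f := rfl

lemma twistCobr_eq_sub (d : a →ₗ[k] a ⊗[k] a) (f : a ⊗[k] a) :
    twistCobr k a d f = d - coboundary k a f := (sub_eq_add_neg d _).symm

lemma IsCocycle.sub_coboundary {d : a →ₗ[k] a ⊗[k] a} (hd : IsCocycle k a d) (f : a ⊗[k] a) :
    IsCocycle k a (d - coboundary k a f) := by
  intro x y
  simp only [LinearMap.sub_apply, coboundary_apply, map_sub, hd x y, act_lie]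
  abel

lemma act₃_tmul (x u v w : a) :
    act₃ k a x (u ⊗ₜ (v ⊗ₜ w)) =
      ⁅x, u⁆ ⊗ₜ (v ⊗ₜ w) + u ⊗ₜ (⁅x, v⁆ ⊗ₜ w) + u ⊗ₜ (v ⊗ₜ ⁅x, w⁆) := by
  simp [act₃, br2, act_tmul, tmul_add, add_assoc]

lemma cyc_tmul (x y z : a) : cyc k a (x ⊗ₜ (y ⊗ₜ z)) = y ⊗ₜ (z ⊗ₜ x) := by
  simp [cyc]

lemma cycSumₗ_apply (w : a ⊗[k] (a ⊗[k] a)) : cycSumₗ k a w = cycSum k a w := rfl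

lemma cycSumₗ_tmul (x y z : a) :
    cycSumₗ k a (x ⊗ₜ (y ⊗ₜ z)) = x ⊗ₜ (y ⊗ₜ z) + y ⊗ₜ (z ⊗ₜ x) + z ⊗ₜ (x ⊗ₜ y) := by
  simp [cycSumₗ, cyc_tmul]

lemma cyc_act₃ (x : a) (w : a ⊗[k] (a ⊗[k] a)) :
    cyc k a (act₃ k a x w) = act₃ k a x (cyc k a w) := by
  induction w using TensorProduct.induction_on with
  | zero => simp
  | tmul u vw =>
    induction vw using TensorProduct.induction_on with
    | zero => simp
    | tmul v w => simp only [act₃_tmul, cyc_tmul, map_add]; abel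
    | add w₁ w₂ h₁ h₂ => simp only [tmul_add, map_add, h₁, h₂]
  | add w₁ w₂ h₁ h₂ => simp only [map_add, h₁, h₂]

lemma cycSumₗ_act₃ (x : a) (w : a ⊗[k] (a ⊗[k] a)) :
    cycSumₗ k a (act₃ k a x w) = act₃ k a x (cycSumₗ k a w) := by
  simp [cycSumₗ, cyc_act₃]

lemma d13_tmul (d : a →ₗ[k] a ⊗[k] a) (u v : a) :
    d13 k a d (u ⊗ₜ v) = TensorProduct.assoc k a a a (d u ⊗ₜ v) := rfl

lemma d13_zero : d13 k a 0 = 0 := by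
  ext u v
  simp [d13_tmul]

lemma d13_add (d e : a →ₗ[k] a ⊗[k] a) : d13 k a (d + e) = d13 k a d + d13 k a e := by
  ext u v
  simp [d13_tmul, add_tmul]

lemma d13_sub (d e : a →ₗ[k] a ⊗[k] a) : d13 k a (d - e) = d13 k a d - d13 k a e := by
  ext u v
  simp [d13_tmul, sub_tmul]

lemma d13_smul (c : k) (d : a →ₗ[k] a ⊗[k] a) : d13 k a (c • d) = c • d13 k a d := by
  ext u v
  simp [d13_tmul, ← smul_tmul']

lemma d13_coboundary_tmul_tmul (p q u v : a) :
    d13 k a (coboundary k a (p ⊗ₜ q)) (u ⊗ₜ v) = ⁅u, p⁆ ⊗ₜ (q ⊗ₜ v) + p ⊗ₜ (⁅u, q⁆ ⊗ₜ v) := by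
  simp [d13_tmul, act_tmul, add_tmul]

lemma C13_23_tmul (p q u v : a) :
    C13_23 k a ((p ⊗ₜ q) ⊗ₜ (u ⊗ₜ v)) = p ⊗ₜ (u ⊗ₜ ⁅q, v⁆) := by
  simp [C13_23, brL, br2]

lemma act₃_assoc (x : a) (w : a ⊗[k] a) (v : a) :
    act₃ k a x (TensorProduct.assoc k a a a (w ⊗ₜ v)) =
      TensorProduct.assoc k a a a (act k a x w ⊗ₜ v + w ⊗ₜ ⁅x, v⁆) := by
  induction w using TensorProduct.induction_on with
  | zero => simp
  | tmul p q => simp [act₃_tmul, act_tmul, add_tmul]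
  | add w₁ w₂ h₁ h₂ => simp only [add_tmul, map_add, h₁, h₂]; abel

lemma IsCocycle.d13_act {d : a →ₗ[k] a ⊗[k] a} (hd : IsCocycle k a d) (x : a) (w : a ⊗[k] a) :
    d13 k a d (act k a x w) = act₃ k a x (d13 k a d w) - d13 k a (coboundary k a (d x)) w := by
  induction w using TensorProduct.induction_on with
  | zero => simp
  | tmul u v =>
    rw [act_tmul, map_add, d13_tmul, d13_tmul, d13_tmul, d13_tmul, hd x u, act₃_assoc,
      coboundary_apply, sub_tmul]
    simp only [map_add, map_sub]
    abel
  | add w₁ w₂ h₁ h₂ => simp only [map_add, h₁, h₂]; abel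

lemma act₃_C13_23 (x : a) (f g : a ⊗[k] a) :
    act₃ k a x (C13_23 k a (f ⊗ₜ g)) = C13_23 k a (act k a x f ⊗ₜ g + f ⊗ₜ act k a x g) := by
  induction f using TensorProduct.induction_on with
  | zero => simp
  | add f₁ f₂ h₁ h₂ => simp only [add_tmul, map_add, h₁, h₂]; abel
  | tmul p q =>
    induction g using TensorProduct.induction_on with
    | zero => simp
    | add g₁ g₂ h₁ h₂ => simp only [tmul_add, map_add, h₁, h₂]; abel
    | tmul u v =>
      simp only [act_tmul, add_tmul, tmul_add, map_add, C13_23_tmul, act₃_tmul, leibniz_lie x q v]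
      abel

-- Polarizing through `alt` makes the identity on `Λ²a` bilinear, so it suffices to check it on
-- pure tensors, where only antisymmetry of the bracket is needed.
lemma cycSumₗ_d13_coboundary_alt (f g : a ⊗[k] a) :
    cycSumₗ k a (d13 k a (coboundary k a (alt k a f)) (alt k a g)) =
      -cycSumₗ k a (C13_23 k a (alt k a f ⊗ₜ alt k a g + alt k a g ⊗ₜ alt k a f)) := by
  induction f using TensorProduct.induction_on with
  | zero => simp [d13_zero]
  | add f₁ f₂ h₁ h₂ =>
    simp only [map_add, d13_add, LinearMap.add_apply, add_tmul, tmul_add, h₁, h₂]; abel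
  | tmul p q =>
    induction g using TensorProduct.induction_on with
    | zero => simp
    | add g₁ g₂ h₁ h₂ => simp only [map_add, add_tmul, tmul_add, h₁, h₂]; abel
    | tmul u v =>
      simp only [alt, LinearMap.sub_apply, LinearMap.id_apply, LinearEquiv.coe_coe, comm_tmul,
        map_sub, d13_sub, sub_tmul, tmul_sub, d13_coboundary_tmul_tmul,
        C13_23_tmul, map_add, cycSumₗ_tmul]
      simp only [← lie_skew u p, ← lie_skew u q, ← lie_skew v p, ← lie_skew v q, neg_tmul,
        tmul_neg]
      abel

lemma cycSumₗ_d13_coboundary [CharZero k] {f g : a ⊗[k] a} (hf : IsAntisym k a f)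
    (hg : IsAntisym k a g) :
    cycSumₗ k a (d13 k a (coboundary k a f) g) = -cycSumₗ k a (C13_23 k a (f ⊗ₜ g + g ⊗ₜ f)) := by
  have h := cycSumₗ_d13_coboundary_alt f g
  rw [hf.alt_eq, hg.alt_eq] at h
  simp only [map_smul, d13_smul, LinearMap.smul_apply, smul_tmul_smul, map_add] at h ⊢
  apply smul_right_injective _ (by norm_num : (4 : k) ≠ 0)
  linear_combination (norm := module) h

lemma cycSumₗ_d13_coboundary_comm [CharZero k] {f g : a ⊗[k] a} (hf : IsAntisym k a f)
    (hg : IsAntisym k a g) :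
    cycSumₗ k a (d13 k a (coboundary k a f) g) = cycSumₗ k a (d13 k a (coboundary k a g) f) := by
  rw [cycSumₗ_d13_coboundary hf hg, cycSumₗ_d13_coboundary hg hf, add_comm]

lemma cycSumₗ_d13_coboundary_act [CharZero k] {f : a ⊗[k] a} (hf : IsAntisym k a f) (x : a) :
    cycSumₗ k a (d13 k a (coboundary k a f) (act k a x f)) =
      -act₃ k a x (cycSumₗ k a (C13_23 k a (f ⊗ₜ f))) := by
  rw [cycSumₗ_d13_coboundary hf (hf.act x), add_comm, ← act₃_C13_23, cycSumₗ_act₃]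

lemma cycSumₗ_d13_sub_coboundary [CharZero k] {d : a →ₗ[k] a ⊗[k] a} (hd : IsCocycle k a d)
    (hanti : ∀ x, IsAntisym k a (d x)) {f : a ⊗[k] a} (hf : IsAntisym k a f) (x : a) :
    cycSumₗ k a (d13 k a (d - coboundary k a f) ((d - coboundary k a f) x)) =
      cycSumₗ k a (d13 k a d (d x)) -
        act₃ k a x (cycSumₗ k a (d13 k a d f + C13_23 k a (f ⊗ₜ f))) := by
  have hcross := cycSumₗ_d13_coboundary_comm (hanti x) hf
  have hquad := cycSumₗ_d13_coboundary_act hf x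
  simp only [d13_sub, LinearMap.sub_apply, coboundary_apply, map_sub, hd.d13_act,
    cycSumₗ_act₃, map_add] at hquad ⊢
  rw [hquad, hcross]
  abel

lemma IsCoJacobi.sub_coboundary [CharZero k] {d : a →ₗ[k] a ⊗[k] a} (hJ : IsCoJacobi k a d)
    (hd : IsCocycle k a d) (hanti : ∀ x, IsAntisym k a (d x)) {f : a ⊗[k] a}
    (hf : IsAntisym k a f) (htw : IsTwist k a d f) : IsCoJacobi k a (d - coboundary k a f) := by
  intro x
  rw [← cycSumₗ_apply, cycSumₗ_d13_sub_coboundary hd hanti hf, cycSumₗ_apply, hJ x,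
    cycSumₗ_apply, htw, map_zero, sub_zero]

/-- twisting a Lie bialgebra by a classical twist gives a Lie bialgebra. -/
theorem twist_of_lie_bialgebra_is_lie_bialgebra
    (k : Type) [Field k] [CharZero k] (a : Type) [LieRing a] [LieAlgebra k a]
    (d : a →ₗ[k] a ⊗[k] a) (hd : IsLieCobracket k a d)
    (f : a ⊗[k] a) (hfa : IsAntisym k a f) (hf : IsTwist k a d f) :
    IsLieCobracket k a (twistCobr k a d f) := by
  obtain ⟨hanti, hcocycle, hcoJacobi⟩ := hd
  rw [twistCobr_eq_sub]
  exact ⟨fun x => (hanti x).sub (hfa.act x), hcocycle.sub_coboundary f,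
    hcoJacobi.sub_coboundary hcocycle hanti hfa hf⟩
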